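/- arXiv:2307.04085 — 2 statements merged into one kernel-verified Lean document; each statement's English description precedes it below -/
import Mathlib

section
/- Verification identity for AMT opening proofs: with the AMT decomposition of φ, for any leaf index x with binary digits (b₁,...,b_h), φ(X) = φ(x) · 1 + Σ_{j=0}^{h} q_{b₁..b_j}(X) · ∏_{i∈range(b₁..b_j)}(X − i), where the j = 0 term uses the root quotient with vanishing polynomial over all of [N]. -/
open Polynomial

/-- The vanishing polynomial of the node at depth `d`, position `a`, of a full binary
tree of height `h` over the evaluation points `0, ..., 2^h − 1`. -/
noncomputable def vanish (F : Type*) [Field F] (h d a : ℕ) : Polynomial F :=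
  ∏ i ∈ Finset.Ico (a * 2 ^ (h - d)) ((a + 1) * 2 ^ (h - d)), (X - C (i : F))

/-- The AMT remainder at the node at depth `d`, position `a`. -/
noncomputable def AMTr (F : Type*) [Field F] (h : ℕ) (φ : Polynomial F) : ℕ → ℕ → Polynomial F
  | 0, _ => φ %ₘ vanish F h 0 0
  | d + 1, a => AMTr F h φ d (a / 2) %ₘ vanish F h (d + 1) a

/-- The AMT quotient at the node at depth `d`, position `a`. -/
noncomputable def AMTq (F : Type*) [Field F] (h : ℕ) (φ : Polynomial F) : ℕ → ℕ → Polynomial F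
  | 0, _ => φ /ₘ vanish F h 0 0
  | d + 1, a => AMTr F h φ d (a / 2) /ₘ vanish F h (d + 1) a

/-! Telescoping the division identities `r_{parent} = q · Z + r` along the path from the root to
the leaf `x` (the depth-`d` ancestor of `x` sits at position `x / 2 ^ (h - d)`) writes `φ` as the
leaf remainder plus `∑ q_j Z_j`. Every `Z_j` on the path vanishes at `x`, and the leaf remainder is
taken modulo `X - x`, so it is the constant `φ(x)`. -/

lemma Nat.mem_Ico_div_mul (x : ℕ) {n : ℕ} (hn : 0 < n) :
    x ∈ Finset.Ico (x / n * n) ((x / n + 1) * n) :=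
  Finset.mem_Ico.mpr ⟨Nat.div_mul_le_self _ _,
    by rw [Nat.add_mul, one_mul]; exact Nat.lt_div_mul_add hn⟩

lemma Nat.div_two_pow_sub_succ_div_two {h d : ℕ} (x : ℕ) (hd : d < h) :
    x / 2 ^ (h - (d + 1)) / 2 = x / 2 ^ (h - d) := by
  rw [Nat.div_div_eq_div_mul, ← pow_succ, Nat.sub_add_eq, Nat.sub_add_cancel (by omega)]

section

variable {F : Type*} [Field F]

lemma eval_vanish_ancestor (h d x : ℕ) : (vanish F h d (x / 2 ^ (h - d))).eval (x : F) = 0 := by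
  rw [vanish, eval_prod]
  exact Finset.prod_eq_zero (Nat.mem_Ico_div_mul x (Nat.two_pow_pos (h - d))) (by simp)

lemma vanish_leaf (h x : ℕ) : vanish F h h x = X - C (x : F) := by
  rw [vanish, Nat.sub_self, pow_zero, mul_one, mul_one, Nat.Ico_succ_singleton,
    Finset.prod_singleton]

lemma AMTr_add_sum_AMTq_mul_vanish (h : ℕ) (φ : F[X]) {x : ℕ} (hx : x < 2 ^ h) :
    ∀ d ≤ h, φ = AMTr F h φ d (x / 2 ^ (h - d))
        + ∑ j ∈ Finset.range (d + 1),
            AMTq F h φ j (x / 2 ^ (h - j)) * vanish F h j (x / 2 ^ (h - j))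
  | 0, _ => by
    rw [Finset.sum_range_one, Nat.sub_zero, Nat.div_eq_of_lt hx, mul_comm]
    exact (modByMonic_add_div φ _).symm
  | d + 1, hd => by
    have hdivide := modByMonic_add_div (AMTr F h φ d (x / 2 ^ (h - d)))
      (vanish F h (d + 1) (x / 2 ^ (h - (d + 1))))
    rw [Finset.sum_range_succ, ← add_assoc, AMTr, AMTq, Nat.div_two_pow_sub_succ_div_two x hd]
    conv_lhs => rw [AMTr_add_sum_AMTq_mul_vanish h φ hx d (by omega), ← hdivide]
    ring

lemma AMTr_leaf_eq_C (h : ℕ) (φ : F[X]) {x : ℕ} (hx : x < 2 ^ h) :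
    AMTr F h φ h x = C ((AMTr F h φ h x).eval (x : F)) := by
  obtain ⟨p, hp⟩ : ∃ p : F[X], AMTr F h φ h x = p %ₘ vanish F h h x := by
    cases h with
    | zero =>
      obtain rfl : x = 0 := by omega
      exact ⟨φ, rfl⟩
    | succ d => exact ⟨_, rfl⟩
  rw [hp, vanish_leaf, modByMonic_X_sub_C_eq_C_eval, eval_C]

end

theorem stmt8_general (F : Type*) [Field F] (h : ℕ) (φ : Polynomial F)
    (x : ℕ) (hx : x < 2 ^ h) :
    φ = C (φ.eval (x : F))
        + ∑ j ∈ Finset.range (h + 1),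
            AMTq F h φ j (x / 2 ^ (h - j)) * vanish F h j (x / 2 ^ (h - j)) := by
  have hφ := AMTr_add_sum_AMTq_mul_vanish h φ hx h le_rfl
  rw [Nat.sub_self, pow_zero, Nat.div_one] at hφ
  have hsum : (∑ j ∈ Finset.range (h + 1),
      AMTq F h φ j (x / 2 ^ (h - j)) * vanish F h j (x / 2 ^ (h - j))).eval (x : F) = 0 := by
    simp only [eval_finsetSum, eval_mul, eval_vanish_ancestor, mul_zero, Finset.sum_const_zero]
  have hleaf : (AMTr F h φ h x).eval (x : F) = φ.eval (x : F) := by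
    conv_rhs => rw [hφ]
    rw [eval_add, hsum, add_zero]
  rwa [AMTr_leaf_eq_C h φ hx, hleaf] at hφ

/-- AMT verification identity: for any leaf index `x < 2^h`,
`φ(X) = φ(x) + ∑_{j=0}^{h} q_j(X) · Z_j(X)`, where `q_j` and `Z_j` are the AMT quotient
and the vanishing polynomial at the depth-`j` node on the root-to-leaf path of `x`. -/
theorem stmt8 (F : Type*) [Field F] (h : ℕ) (φ : Polynomial F)
    (hdeg : φ.degree < (2 ^ h : ℕ)) (x : ℕ) (hx : x < 2 ^ h) :
    φ = C (φ.eval (x : F))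
        + ∑ j ∈ Finset.range (h + 1),
            AMTq F h φ j (x / 2 ^ (h - j)) * vanish F h j (x / 2 ^ (h - j)) :=
  stmt8_general F h φ x hx
end

section
/- Rational function identity underlying Verkle multiproofs: for field elements r, t and b₁,...,b_h with t ≠ b_{j+1} for all j, and polynomials f₀,...,f_{h−1} with values u_{j+1} = f_j(b_{j+1}), define g(X) = Σ_{j=0}^{h−1} r^j (f_j(X) − u_{j+1})/(X − b_{j+1}) and h(X) = Σ_{j=0}^{h−1} r^j f_j(X)/(t − b_{j+1}). Then (h(X) − g(X) − (h(t) − g(t)))/(X − t) = Σ_{j=0}^{h−1} (r^j/(t − b_{j+1})) · (f_j(X) − u_{j+1})/(X − b_{j+1}), and both sides are polynomials. -/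
/-!
Write `qⱼ = (fⱼ − uⱼ) /ₘ (X − bⱼ)` and `cⱼ = rʲ/(t − bⱼ)`, so that `fⱼ = (X − bⱼ) qⱼ + uⱼ` and
`rʲ = cⱼ (t − bⱼ)`. Then each summand of `h − g` is
`cⱼ fⱼ − rʲ qⱼ = cⱼ ((X − bⱼ) − (t − bⱼ)) qⱼ + cⱼ uⱼ = (X − t) · cⱼ qⱼ + cⱼ uⱼ`,
so `h − g = (X − t) · ∑ⱼ cⱼ qⱼ + const`; subtracting the value at `t` kills the constant and
dividing by `X − t` leaves `∑ⱼ cⱼ qⱼ`.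
-/

open Polynomial

namespace Polynomial

variable {R : Type*} [CommRing R]

theorem sub_C_eval_divByMonic_X_sub_C_of_eq {p q : R[X]} {t k : R}
    (hp : p = (X - C t) * q + C k) : (p - C (p.eval t)) /ₘ (X - C t) = q := by
  subst hp
  simpa using mul_divByMonic_cancel_left q (monic_X_sub_C t)

theorem eq_X_sub_C_mul_divByMonic_add_C_eval (p : R[X]) (a : R) :
    p = (X - C a) * ((p - C (p.eval a)) /ₘ (X - C a)) + C (p.eval a) := by
  rw [mul_divByMonic_eq_iff_isRoot.mpr (by simp [IsRoot]), sub_add_cancel]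

theorem C_mul_sub_C_mul_eq_X_sub_C_mul_add_C {f q : R[X]} {b u c s t : R}
    (hf : f = (X - C b) * q + C u) (hs : s = c * (t - b)) :
    C c * f - C s * q = (X - C t) * (C c * q) + C (c * u) := by
  subst hf hs
  simp only [map_mul, map_sub]
  ring

end Polynomial

/-- Verkle multiproof identity: with `πⱼ = (fⱼ(X) − u_{j+1})/(X − b_{j+1})`,
`g(X) = ∑ⱼ rʲ πⱼ(X)` and `h(X) = ∑ⱼ rʲ fⱼ(X)/(t − b_{j+1})`, the opening quotient of
`h − g` at the point `t` equals `∑ⱼ (rʲ/(t − b_{j+1})) · πⱼ(X)`. -/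
theorem stmt17 {F : Type*} [Field F] (n : ℕ) (r t : F)
    (b : Fin n → F) (f : Fin n → Polynomial F) (ht : ∀ j, t ≠ b j) :
    ((∑ j : Fin n, C (r ^ (j : ℕ) / (t - b j)) * f j)
        - (∑ j : Fin n, C (r ^ (j : ℕ)) *
            ((f j - C ((f j).eval (b j))) /ₘ (X - C (b j))))
        - C (((∑ j : Fin n, C (r ^ (j : ℕ) / (t - b j)) * f j)
              - (∑ j : Fin n, C (r ^ (j : ℕ)) *
                  ((f j - C ((f j).eval (b j))) /ₘ (X - C (b j))))).eval t))
      /ₘ (X - C t)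
      = ∑ j : Fin n, C (r ^ (j : ℕ) / (t - b j)) *
          ((f j - C ((f j).eval (b j))) /ₘ (X - C (b j))) := by
  apply sub_C_eval_divByMonic_X_sub_C_of_eq
    (k := ∑ j : Fin n, r ^ (j : ℕ) / (t - b j) * (f j).eval (b j))
  rw [← Finset.sum_sub_distrib, Finset.mul_sum, map_sum, ← Finset.sum_add_distrib]
  refine Finset.sum_congr rfl fun j _ => ?_
  exact C_mul_sub_C_mul_eq_X_sub_C_mul_add_C (eq_X_sub_C_mul_divByMonic_add_C_eval _ _)
    (div_mul_cancel₀ _ (sub_ne_zero.mpr (ht j))).symm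
end
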